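/- (Extended mean value theorem for α-differentiable functions) Let 0 < a < b, β > 0, α ∈ (0,1), and let f, g : [a,b] → ℝ be continuous on [a,b] and α-differentiable on (a,b) in the sense of the local M-derivative, with g(b) ≠ g(a) and 𝒟_M^{α,β} g nonvanishing on (a,b). Then there exists c ∈ (a,b) such that 𝒟_M^{α,β} f(c) / 𝒟_M^{α,β} g(c) = (f(b) − f(a)) / (g(b) − g(a)). -/

import Mathlib

/-
Since `Γ ≥ 1/2` on `[1, ∞)`, the series for `E_β` converges uniformly near `0`, so
`E_β` is continuous at `0` with `E_β(0) = 1` and `t · E_β(ε t^{-α}) → t` as `ε → 0`.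
At a local maximum of `f` the numerator `f (t · E_β(ε t^{-α})) - f t` is therefore eventually
`≤ 0`, so the difference quotient is `≤ 0` for `ε > 0` and `≥ 0` for `ε < 0`, and the local
M-derivative vanishes. This gives Rolle's theorem, and Cauchy's mean value theorem follows by
applying it to `(f b - f a) g - (g b - g a) f`.
-/

open Filter Topology

/-- One-parameter Mittag-Leffler function `E_β(x) = ∑_{k=0}^∞ x^k / Γ(βk+1)`. -/
noncomputable def mittagLeffler (β x : ℝ) : ℝ :=
  ∑' k : ℕ, x ^ k / Real.Gamma (β * k + 1)

/-- `f` has local M-derivative `L` of order `α` with parameter `β` at `t`, i.e.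
`lim_{ε→0} (f (t · E_β (ε t^{-α})) - f t)/ε = L`. -/
def HasLocalMDerivAt (α β : ℝ) (f : ℝ → ℝ) (t L : ℝ) : Prop :=
  Tendsto (fun ε : ℝ => (f (t * mittagLeffler β (ε * t ^ (-α))) - f t) / ε)
    (𝓝[≠] (0 : ℝ)) (𝓝 L)

open Set

theorem Real.one_le_Gamma_of_two_le {y : ℝ} (hy : 2 ≤ y) : 1 ≤ Real.Gamma y :=
  Real.Gamma_two ▸ Real.Gamma_strictMonoOn_Ici.monotoneOn (mem_Ici.2 le_rfl) (mem_Ici.2 hy) hy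

theorem Real.half_le_Gamma {y : ℝ} (hy : 1 ≤ y) : 1 / 2 ≤ Real.Gamma y := by
  rcases le_or_gt y 2 with hy2 | hy2
  -- `y Γ(y) = Γ(y + 1) ≥ 1` with `y ≤ 2`
  · have hsucc := Real.one_le_Gamma_of_two_le (show 2 ≤ y + 1 by linarith)
    rw [Real.Gamma_add_one (by positivity)] at hsucc
    nlinarith
  · linarith [Real.one_le_Gamma_of_two_le hy2.le]

theorem mittagLeffler_zero (β : ℝ) : mittagLeffler β 0 = 1 := by
  rw [mittagLeffler, tsum_eq_single 0 (fun k hk => by simp [zero_pow hk])]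
  simp

theorem continuousOn_mittagLeffler {β r : ℝ} (hβ : 0 ≤ β) (hr₀ : 0 ≤ r) (hr₁ : r < 1) :
    ContinuousOn (mittagLeffler β) (Metric.closedBall 0 r) := by
  refine continuousOn_tsum (u := fun k => r ^ k / (1 / 2)) (fun k => by fun_prop)
    ((summable_geometric_of_lt_one hr₀ hr₁).div_const _) fun k x hx => ?_
  have hΓ : 1 / 2 ≤ Real.Gamma (β * k + 1) :=
    Real.half_le_Gamma (le_add_of_nonneg_left (by positivity))
  rw [norm_div, norm_pow, Real.norm_of_nonneg (by linarith : 0 ≤ Real.Gamma (β * k + 1))]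
  exact div_le_div₀ (by positivity)
    (pow_le_pow_left₀ (norm_nonneg x) (mem_closedBall_zero_iff.1 hx) k) (by norm_num) hΓ

theorem tendsto_mittagLeffler_nhds_zero {β : ℝ} (hβ : 0 ≤ β) :
    Tendsto (mittagLeffler β) (𝓝 0) (𝓝 1) := by
  rw [← mittagLeffler_zero β]
  exact (continuousOn_mittagLeffler hβ one_half_pos.le one_half_lt_one).continuousAt
    (Metric.closedBall_mem_nhds 0 one_half_pos)

theorem tendsto_mul_mittagLeffler (α : ℝ) {β : ℝ} (hβ : 0 ≤ β) (t : ℝ) :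
    Tendsto (fun ε : ℝ => t * mittagLeffler β (ε * t ^ (-α))) (𝓝 0) (𝓝 t) := by
  have hinner : Tendsto (fun ε : ℝ => ε * t ^ (-α)) (𝓝 0) (𝓝 0) := by
    simpa using (continuous_mul_const (t ^ (-α))).tendsto 0
  simpa using ((tendsto_mittagLeffler_nhds_zero hβ).comp hinner).const_mul t

namespace HasLocalMDerivAt

variable {α β t L M : ℝ} {f g : ℝ → ℝ}

theorem neg (hf : HasLocalMDerivAt α β f t L) :
    HasLocalMDerivAt α β (fun x => -f x) t (-L) :=
  (Tendsto.neg hf).congr fun ε => by ring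

theorem const_mul (c : ℝ) (hf : HasLocalMDerivAt α β f t L) :
    HasLocalMDerivAt α β (fun x => c * f x) t (c * L) :=
  (Tendsto.const_mul c hf).congr fun ε => by ring

theorem sub (hf : HasLocalMDerivAt α β f t L) (hg : HasLocalMDerivAt α β g t M) :
    HasLocalMDerivAt α β (fun x => f x - g x) t (L - M) :=
  (Tendsto.sub hf hg).congr fun ε => by ring

theorem eq_zero_of_isLocalMax (hβ : 0 ≤ β) (hf : HasLocalMDerivAt α β f t L)
    (hmax : IsLocalMax f t) : L = 0 := by
  have hle : ∀ᶠ ε in 𝓝 (0 : ℝ), f (t * mittagLeffler β (ε * t ^ (-α))) - f t ≤ 0 :=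
    (tendsto_mul_mittagLeffler α hβ t).eventually (hmax.mono fun x hx => sub_nonpos.2 hx)
  have hL_nonpos : L ≤ 0 :=
    le_of_tendsto (hf.mono_left (nhdsGT_le_nhdsNE 0)) <| by
      filter_upwards [nhdsWithin_le_nhds hle, self_mem_nhdsWithin] with ε hε hpos
      exact div_nonpos_of_nonpos_of_nonneg hε (le_of_lt hpos)
  have hL_nonneg : 0 ≤ L :=
    ge_of_tendsto (hf.mono_left (nhdsLT_le_nhdsNE 0)) <| by
      filter_upwards [nhdsWithin_le_nhds hle, self_mem_nhdsWithin] with ε hε hneg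
      exact div_nonneg_of_nonpos hε (le_of_lt hneg)
  linarith

theorem eq_zero_of_isLocalMin (hβ : 0 ≤ β) (hf : HasLocalMDerivAt α β f t L)
    (hmin : IsLocalMin f t) : L = 0 :=
  neg_eq_zero.1 <| hf.neg.eq_zero_of_isLocalMax hβ hmin.neg

theorem eq_zero_of_isLocalExtr (hβ : 0 ≤ β) (hf : HasLocalMDerivAt α β f t L)
    (hextr : IsLocalExtr f t) : L = 0 :=
  hextr.elim (hf.eq_zero_of_isLocalMin hβ) (hf.eq_zero_of_isLocalMax hβ)

end HasLocalMDerivAt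

theorem exists_hasLocalMDerivAt_eq_zero {α β a b : ℝ} (hβ : 0 ≤ β) (hab : a < b)
    {f Df : ℝ → ℝ} (hfc : ContinuousOn f (Icc a b)) (hfab : f a = f b)
    (hfd : ∀ x ∈ Ioo a b, HasLocalMDerivAt α β f x (Df x)) :
    ∃ c ∈ Ioo a b, Df c = 0 :=
  let ⟨c, hc, hextr⟩ := exists_isLocalExtr_Ioo hab hfc hfab
  ⟨c, hc, (hfd c hc).eq_zero_of_isLocalExtr hβ hextr⟩

theorem stmt14_general (a b α β : ℝ) (hab : a < b)
    (hβ : 0 < β)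
    (f g Df Dg : ℝ → ℝ)
    (hfc : ContinuousOn f (Set.Icc a b)) (hgc : ContinuousOn g (Set.Icc a b))
    (hfd : ∀ x ∈ Set.Ioo a b, HasLocalMDerivAt α β f x (Df x))
    (hgd : ∀ x ∈ Set.Ioo a b, HasLocalMDerivAt α β g x (Dg x))
    (hgab : g b ≠ g a) (hDg : ∀ x ∈ Set.Ioo a b, Dg x ≠ 0) :
    ∃ c ∈ Set.Ioo a b, Df c / Dg c = (f b - f a) / (g b - g a) := by
  obtain ⟨c, hc, hc0⟩ := exists_hasLocalMDerivAt_eq_zero hβ.le hab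
    (f := fun x => (f b - f a) * g x - (g b - g a) * f x)
    ((continuousOn_const.mul hgc).sub (continuousOn_const.mul hfc)) (by ring)
    fun x hx => ((hgd x hx).const_mul _).sub ((hfd x hx).const_mul _)
  refine ⟨c, hc, ?_⟩
  rw [div_eq_div_iff (hDg c hc) (sub_ne_zero.2 hgab)]
  linarith

/-- Extended mean value theorem for α-differentiable functions. -/
theorem stmt14 (a b α β : ℝ) (ha : 0 < a) (hab : a < b)
    (hα : α ∈ Set.Ioo (0 : ℝ) 1) (hβ : 0 < β)
    (f g Df Dg : ℝ → ℝ)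
    (hfc : ContinuousOn f (Set.Icc a b)) (hgc : ContinuousOn g (Set.Icc a b))
    (hfd : ∀ x ∈ Set.Ioo a b, HasLocalMDerivAt α β f x (Df x))
    (hgd : ∀ x ∈ Set.Ioo a b, HasLocalMDerivAt α β g x (Dg x))
    (hgab : g b ≠ g a) (hDg : ∀ x ∈ Set.Ioo a b, Dg x ≠ 0) :
    ∃ c ∈ Set.Ioo a b, Df c / Dg c = (f b - f a) / (g b - g a) :=
  stmt14_general a b α β hab hβ f g Df Dg hfc hgc hfd hgd hgab hDg
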